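/- arXiv:0712.1142 — 2 statements merged into one kernel-verified Lean document; each statement's English description precedes it below -/
import Mathlib

section
/- Assume that for each sort i ∈ I every element of T1(S)(i) is compatible with the partial order P(i), and that every v ∈ V(i,j) correlates P(j) to P(i), for all i,j ∈ I. Then the following are equivalent: (a') for every i ∈ I, every ambiguity of T1(S)(i) is resolvable relative to P(i); (a'') for every i ∈ I, every V-critical ambiguity of T1(S)(i) is resolvable relative to P(i). -/
open Set Filter Topology

/-- The set of all finite compositions of elements of `T1`, including the identity. -/
def TS {M : Type*} [AddCommGroup M] (T1 : Set (AddMonoid.End M)) : Set (AddMonoid.End M) :=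
  ↑(Submonoid.closure T1)

/-- Smallest topologically closed additive subgroup containing `Z` and stable under `R`. -/
def Cspan {M : Type*} [AddCommGroup M] [TopologicalSpace M]
    (R : Set (AddMonoid.End M)) (Z : Set M) : Set M :=
  ⋂₀ {N : Set M | Z ⊆ N ∧ IsClosed N ∧ (∃ H : AddSubgroup M, N = ↑H) ∧
      ∀ r ∈ R, ∀ a ∈ N, r a ∈ N}

def DSM {M : Type*} [AddCommGroup M] [TopologicalSpace M]
    (R : Set (AddMonoid.End M)) (Y : Set M) (P : M → M → Prop) (μ : M) : Set M :=
  Cspan R {ν | ν ∈ Y ∧ P ν μ}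

def Compatible {M : Type*} [AddCommGroup M] [TopologicalSpace M]
    (R : Set (AddMonoid.End M)) (Y : Set M) (P : M → M → Prop)
    (t : AddMonoid.End M) : Prop :=
  ∀ μ ∈ Y, t μ = μ ∨ t μ ∈ DSM R Y P μ

def DIS {M : Type*} [AddCommGroup M] [TopologicalSpace M]
    (R : Set (AddMonoid.End M)) (Y : Set M) (P : M → M → Prop)
    (T1 : Set (AddMonoid.End M)) (μ : M) : Set M :=
  Cspan R {x | ∃ ν ∈ Y, P ν μ ∧ ∃ t ∈ T1, x = ν - t ν}

/-- `R*Y`: images of elements of `Y` under finite compositions of elements of `R`. -/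
def RstarY {M : Type*} [AddCommGroup M] (R : Set (AddMonoid.End M)) (Y : Set M) : Set M :=
  {b | ∃ r ∈ (Submonoid.closure R : Submonoid (AddMonoid.End M)), ∃ μ ∈ Y, b = r μ}

/-- An ambiguity-shaped triple `(t, μ, u)` in a group `α`. -/
structure Amb (α : Type*) [AddCommGroup α] where
  t : AddMonoid.End α
  mu : α
  u : AddMonoid.End α

/-- `(t,μ,u)` is an ambiguity of `T1`: both reductions are simple and act
nontrivially on the monomial `μ ∈ Y`. -/
def IsAmb {α : Type*} [AddCommGroup α] (T1 : Set (AddMonoid.End α)) (Y : Set α)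
    (A : Amb α) : Prop :=
  A.t ∈ T1 ∧ A.u ∈ T1 ∧ A.mu ∈ Y ∧ A.t A.mu ≠ A.mu ∧ A.u A.mu ≠ A.mu

section Multi

variable {I : Type*} {M : I → Type*} [∀ i, AddCommGroup (M i)]

/-- `A` is a `V`-shadow of `A'`. -/
def IsShadow (V : ∀ i j : I, Set (M j →+ M i)) {i i' : I}
    (A : Amb (M i)) (A' : Amb (M i')) : Prop :=
  ∃ v ∈ V i i', A.mu = v A'.mu ∧ A.t A.mu = v (A'.t A'.mu) ∧ A.u A.mu = v (A'.u A'.mu)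

/-- `A` is a proper `V`-shadow of `A'`. -/
def IsProperShadow (V : ∀ i j : I, Set (M j →+ M i)) {i i' : I}
    (A : Amb (M i)) (A' : Amb (M i')) : Prop :=
  IsShadow V A A' ∧ ¬ IsShadow V A' A

/-- `A` is `V`-shadow-minimal: not a proper `V`-shadow of any ambiguity. -/
def ShadowMinimal (T1 : ∀ i, Set (AddMonoid.End (M i))) (Y : ∀ i, Set (M i))
    (V : ∀ i j : I, Set (M j →+ M i)) {i : I} (A : Amb (M i)) : Prop :=
  ¬ ∃ i' : I, ∃ A' : Amb (M i'), IsAmb (T1 i') (Y i') A' ∧ IsProperShadow V A A'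

/-- `A` is `V`-shadow-critical: not a proper `V`-shadow of any
`V`-shadow-minimal ambiguity. -/
def ShadowCritical (T1 : ∀ i, Set (AddMonoid.End (M i))) (Y : ∀ i, Set (M i))
    (V : ∀ i j : I, Set (M j →+ M i)) {i : I} (A : Amb (M i)) : Prop :=
  ¬ ∃ i' : I, ∃ A' : Amb (M i'), IsAmb (T1 i') (Y i') A' ∧
    ShadowMinimal T1 Y V A' ∧ IsProperShadow V A A'

/-- A bihomomorphism in two group variables. -/
def Bihom {α β γ : Type*} [AddCommGroup α] [AddCommGroup β] [AddCommGroup γ]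
    (w : α → β → γ) : Prop :=
  ∀ a1 b1 : α, ∀ a2 b2 : β,
    w (a1 - b1) (a2 - b2) = w a1 a2 - w b1 a2 - w a1 b2 + w b1 b2

/-- The biadvanceability condition on a bihomomorphism. -/
def Biadv (R T1 : ∀ i, Set (AddMonoid.End (M i))) (Y : ∀ i, Set (M i))
    (i i1 i2 : I) (w : M i1 → M i2 → M i) : Prop :=
  (∀ t1 ∈ T1 i1, ∀ b1 ∈ RstarY (R i1) (Y i1), ∀ b2 ∈ RstarY (R i2) (Y i2),
    ∃ t ∈ TS (T1 i), t (w b1 b2) = w (t1 b1) b2) ∧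
  (∀ t2 ∈ TS (T1 i2), ∀ b1 ∈ RstarY (R i1) (Y i1), ∀ b2 ∈ RstarY (R i2) (Y i2),
    ∃ t ∈ TS (T1 i), t (w b1 b2) = w b1 (t2 b2))

/-- `A` is a `(V(i,i₁),V(i,i₂))`-montage ambiguity. -/
def IsMontage [∀ i, TopologicalSpace (M i)]
    (R T1 : ∀ i, Set (AddMonoid.End (M i))) (Y : ∀ i, Set (M i))
    (V : ∀ i j : I, Set (M j →+ M i)) {i : I} (i1 i2 : I) (A : Amb (M i)) : Prop :=
  ∃ w : M i1 → M i2 → M i,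
    Continuous (fun p : M i1 × M i2 => w p.1 p.2) ∧
    Bihom w ∧
    Biadv R T1 Y i i1 i2 w ∧
    (∀ ρ ∈ Y i2, ∃ v ∈ V i i1, ∀ x : M i1, v x = w x ρ) ∧
    (∀ ρ ∈ Y i1, ∃ v ∈ V i i2, ∀ x : M i2, v x = w ρ x) ∧
    ∃ lam ∈ Y i1, ∃ t' ∈ TS (T1 i1), ∃ nu ∈ Y i2, ∃ u' ∈ TS (T1 i2),
      A.mu = w lam nu ∧ A.t A.mu = w (t' lam) nu ∧ A.u A.mu = w lam (u' nu)

/-- `A` is a `V`-critical ambiguity. -/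
def VCritical [∀ i, TopologicalSpace (M i)]
    (R T1 : ∀ i, Set (AddMonoid.End (M i))) (Y : ∀ i, Set (M i))
    (V : ∀ i j : I, Set (M j →+ M i)) {i : I} (A : Amb (M i)) : Prop :=
  ShadowCritical T1 Y V A ∧ ∀ i1 i2 : I, ¬ IsMontage R T1 Y V i1 i2 A

end Multi

/-!
An ambiguity that is not `V`-critical is a montage ambiguity or a proper shadow of a
shadow-minimal one; a shadow-minimal ambiguity is shadow-critical, so it is `V`-critical or a
montage ambiguity. It therefore suffices that montage ambiguities are always resolvable and that
resolvability passes to shadows. In both cases a continuous additive map has to send a closed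
span into `DIS`, which need only be checked on the generators `r ν` with `ν < μ`; there
compatibility gives `m - s m ∈ DIS μ` for `m ∈ DSM μ` and `s ∈ T(S)`, and advanceability turns the
image of a reduction into such a difference. For a montage `μ = w(λ,ν)` choose `s` with
`s (w(λ,ν)) = w(λ,u'ν)`; then
`w(t'λ,ν) - w(λ,u'ν) = (w(t'λ,ν) - s w(t'λ,ν)) - s (w(λ,ν) - w(t'λ,ν))`,
and the last term is resolved by peeling off the simple reductions of `t'` one at a time.
-/

section Cspan

variable {M : Type*} [AddCommGroup M] [TopologicalSpace M] {R : Set (AddMonoid.End M)} {Z : Set M}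

theorem subset_Cspan : Z ⊆ Cspan R Z :=
  fun _ hz => mem_sInter.2 fun _ hN => hN.1 hz

theorem isClosed_Cspan : IsClosed (Cspan R Z) :=
  isClosed_sInter fun _ hN => hN.2.1

theorem Cspan_minimal {N : AddSubgroup M} (hZ : Z ⊆ N) (hN : IsClosed (N : Set M))
    (hR : ∀ r ∈ R, ∀ a ∈ N, r a ∈ N) : Cspan R Z ⊆ N :=
  sInter_subset_of_mem ⟨hZ, hN, ⟨N, rfl⟩, hR⟩

variable (R Z) in
def cspanAddSubgroup : AddSubgroup M where
  carrier := Cspan R Z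
  zero_mem' := mem_sInter.2 fun _ ⟨_, _, ⟨H, hH⟩, _⟩ => hH ▸ H.zero_mem
  add_mem' ha hb := mem_sInter.2 fun N hN => by
    obtain ⟨H, rfl⟩ := hN.2.2.1
    exact H.add_mem (mem_sInter.1 ha _ hN) (mem_sInter.1 hb _ hN)
  neg_mem' ha := mem_sInter.2 fun N hN => by
    obtain ⟨H, rfl⟩ := hN.2.2.1
    exact H.neg_mem (mem_sInter.1 ha _ hN)

theorem zero_mem_Cspan : (0 : M) ∈ Cspan R Z := (cspanAddSubgroup R Z).zero_mem

theorem add_mem_Cspan {x y : M} (hx : x ∈ Cspan R Z) (hy : y ∈ Cspan R Z) :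
    x + y ∈ Cspan R Z :=
  (cspanAddSubgroup R Z).add_mem hx hy

theorem sub_mem_Cspan {x y : M} (hx : x ∈ Cspan R Z) (hy : y ∈ Cspan R Z) :
    x - y ∈ Cspan R Z :=
  (cspanAddSubgroup R Z).sub_mem hx hy

theorem map_mem_Cspan {r : AddMonoid.End M} (hr : r ∈ Submonoid.closure R) {x : M}
    (hx : x ∈ Cspan R Z) : r x ∈ Cspan R Z := by
  induction hr using Submonoid.closure_induction generalizing x with
  | mem r hr => exact mem_sInter.2 fun N hN => hN.2.2.2 r hr x (mem_sInter.1 hx N hN)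
  | one => exact hx
  | mul a b _ _ ha hb => exact ha (hb hx)

theorem continuous_of_mem_closure {S : Set (AddMonoid.End M)} (hS : ∀ s ∈ S, Continuous s)
    {s : AddMonoid.End M} (hs : s ∈ Submonoid.closure S) : Continuous s := by
  induction hs using Submonoid.closure_induction with
  | mem s hs => exact hS s hs
  | one => exact continuous_id
  | mul a b _ _ ha hb => exact ha.comp hb

/-- The closed subgroup of those `x` with `f (r x) ∈ N` for all `r ∈ R*` is `R`-stable, so it
contains `Cspan R Z`. -/
theorem mapsTo_Cspan {M' F : Type*} [AddCommGroup M'] [TopologicalSpace M'] [FunLike F M M']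
    [AddMonoidHomClass F M M'] (hR : ∀ r ∈ R, Continuous r) (f : F) (hf : Continuous f)
    {N : AddSubgroup M'} (hN : IsClosed (N : Set M'))
    (h : ∀ r ∈ Submonoid.closure R, ∀ z ∈ Z, f (r z) ∈ N) :
    MapsTo f (Cspan R Z) N := by
  let N' : AddSubgroup M := ⨅ r ∈ Submonoid.closure R, N.comap ((f : M →+ M').comp r)
  have hmem {x : M} : x ∈ N' ↔ ∀ r ∈ Submonoid.closure R, f (r x) ∈ N := by
    simp only [N', AddSubgroup.mem_iInf, AddSubgroup.mem_comap]; rfl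
  have hsub : Cspan R Z ⊆ N' := by
    refine Cspan_minimal (fun z hz => hmem.2 fun r hr => h r hr z hz) ?_
      fun r hr a ha => hmem.2 fun r' hr' => hmem.1 ha (r' * r)
        (mul_mem hr' (Submonoid.subset_closure hr))
    simp only [N', AddSubgroup.coe_iInf, AddSubgroup.coe_comap]
    exact isClosed_iInter fun r => isClosed_iInter fun hr =>
      hN.preimage (hf.comp (continuous_of_mem_closure hR hr))
  exact fun x hx => by simpa using hmem.1 (hsub hx) 1 (one_mem _)

theorem mapsTo_Cspan_Cspan {M' F : Type*} [AddCommGroup M'] [TopologicalSpace M']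
    [FunLike F M M'] [AddMonoidHomClass F M M'] {R' : Set (AddMonoid.End M')} {Z' : Set M'}
    (hR : ∀ r ∈ R, Continuous r) (f : F) (hf : Continuous f)
    (h : ∀ r ∈ Submonoid.closure R, ∀ z ∈ Z, f (r z) ∈ Cspan R' Z') :
    MapsTo f (Cspan R Z) (Cspan R' Z') :=
  mapsTo_Cspan hR f hf (N := cspanAddSubgroup R' Z') isClosed_Cspan h

end Cspan

theorem mem_RstarY {M : Type*} [AddCommGroup M] {R : Set (AddMonoid.End M)} {Y : Set M} {μ : M}
    (hμ : μ ∈ Y) : μ ∈ RstarY R Y :=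
  ⟨1, one_mem _, μ, hμ, rfl⟩

section Reduction

variable {M : Type*} [AddCommGroup M] [TopologicalSpace M]
  {R T1 : Set (AddMonoid.End M)} {Y : Set M} {P : M → M → Prop}

variable (R T1 Y P) in
def Resolvable (A : Amb M) : Prop :=
  A.t A.mu - A.u A.mu ∈ DIS R Y P T1 A.mu

theorem mem_DSM {μ ν : M} (hν : ν ∈ Y) (h : P ν μ) : ν ∈ DSM R Y P μ :=
  subset_Cspan ⟨hν, h⟩

theorem sub_mem_DIS {μ ν : M} {t : AddMonoid.End M} (hν : ν ∈ Y) (h : P ν μ) (ht : t ∈ T1) :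
    ν - t ν ∈ DIS R Y P T1 μ :=
  subset_Cspan ⟨ν, hν, h, t, ht, rfl⟩

theorem DSM_mono (hP : ∀ a b c : M, P a b → P b c → P a c) {ρ μ : M} (h : P ρ μ) :
    DSM R Y P ρ ⊆ DSM R Y P μ :=
  Cspan_minimal (N := cspanAddSubgroup _ _) (fun _ hν => mem_DSM hν.1 (hP _ _ _ hν.2 h))
    isClosed_Cspan fun _ hr _ ha => map_mem_Cspan (Submonoid.subset_closure hr) ha

variable (R T1 Y P) in
structure CompatibleReductionSystem : Prop where
  continuous_of_mem_R : ∀ r ∈ R, Continuous r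
  continuous_of_mem_T1 : ∀ t ∈ T1, Continuous t
  comm : ∀ t ∈ T1, ∀ r ∈ R, ∀ a, t (r a) = r (t a)
  compatible : ∀ t ∈ T1, Compatible R Y P t
  trans : ∀ a b c : M, P a b → P b c → P a c

namespace CompatibleReductionSystem

theorem comm_of_mem_closure (hS : CompatibleReductionSystem R T1 Y P) {t r : AddMonoid.End M}
    (ht : t ∈ T1) (hr : r ∈ Submonoid.closure R) (a : M) : t (r a) = r (t a) := by
  induction hr using Submonoid.closure_induction generalizing a with
  | mem r hr => exact hS.comm t ht r hr a
  | one => rfl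
  | mul r r' _ _ h h' => exact (h (r' a)).trans (congrArg r (h' a))

theorem map_mem_DSM (hS : CompatibleReductionSystem R T1 Y P) {t : AddMonoid.End M}
    (ht : t ∈ T1) {μ ν : M} (hν : ν ∈ Y) (h : P ν μ) : t ν ∈ DSM R Y P μ := by
  rcases hS.compatible t ht ν hν with h' | h'
  · rw [h']; exact mem_DSM hν h
  · exact DSM_mono hS.trans h h'

theorem mapsTo_DSM (hS : CompatibleReductionSystem R T1 Y P) {s : AddMonoid.End M}
    (hs : s ∈ Submonoid.closure T1) (μ : M) : MapsTo s (DSM R Y P μ) (DSM R Y P μ) := by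
  induction hs using Submonoid.closure_induction with
  | mem t ht =>
    refine mapsTo_Cspan_Cspan hS.continuous_of_mem_R t (hS.continuous_of_mem_T1 t ht)
      fun r hr ν hν => ?_
    rw [hS.comm_of_mem_closure ht hr]
    exact map_mem_Cspan hr (hS.map_mem_DSM ht hν.1 hν.2)
  | one => exact mapsTo_id _
  | mul a b _ _ ha hb => exact ha.comp hb

theorem compatible_of_mem_closure (hS : CompatibleReductionSystem R T1 Y P)
    {s : AddMonoid.End M} (hs : s ∈ Submonoid.closure T1) : Compatible R Y P s := by
  induction hs using Submonoid.closure_induction with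
  | mem t ht => exact hS.compatible t ht
  | one => exact fun _ _ => Or.inl rfl
  | mul a b ha _ iha ihb =>
    intro μ hμ
    rcases ihb μ hμ with h | h
    · simpa only [AddMonoid.End.coe_mul, Function.comp_apply, h] using iha μ hμ
    · exact Or.inr (hS.mapsTo_DSM ha μ h)

theorem map_mem_DSM_of_ne (hS : CompatibleReductionSystem R T1 Y P) {s : AddMonoid.End M}
    (hs : s ∈ Submonoid.closure T1) {μ : M} (hμ : μ ∈ Y) (hne : s μ ≠ μ) :
    s μ ∈ DSM R Y P μ :=
  (hS.compatible_of_mem_closure hs μ hμ).resolve_left hne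

theorem sub_map_mem_DIS [IsTopologicalAddGroup M] (hS : CompatibleReductionSystem R T1 Y P)
    {s : AddMonoid.End M} (hs : s ∈ Submonoid.closure T1) {μ m : M} (hm : m ∈ DSM R Y P μ) :
    m - s m ∈ DIS R Y P T1 μ := by
  induction hs using Submonoid.closure_induction generalizing m with
  | mem t ht =>
    refine mapsTo_Cspan_Cspan hS.continuous_of_mem_R (1 - t)
      (continuous_id.sub (hS.continuous_of_mem_T1 t ht)) (fun r hr ν hν => ?_) hm
    change r ν - t (r ν) ∈ _
    rw [hS.comm_of_mem_closure ht hr, ← map_sub]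
    exact map_mem_Cspan hr (sub_mem_DIS hν.1 hν.2 ht)
  | one => exact (sub_self m).symm ▸ zero_mem_Cspan
  | mul a b ha _ iha ihb =>
    rw [AddMonoid.End.coe_mul, Function.comp_apply, ← sub_add_sub_cancel m (b m)]
    exact add_mem_Cspan (ihb hm) (iha (hS.mapsTo_DSM ‹_› μ hm))

theorem mapsTo_DIS [IsTopologicalAddGroup M] (hS : CompatibleReductionSystem R T1 Y P)
    {s : AddMonoid.End M} (hs : s ∈ Submonoid.closure T1) (μ : M) :
    MapsTo s (DIS R Y P T1 μ) (DIS R Y P T1 μ) := by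
  induction hs using Submonoid.closure_induction with
  | mem t ht =>
    refine mapsTo_Cspan_Cspan hS.continuous_of_mem_R t (hS.continuous_of_mem_T1 t ht)
      fun r hr x ⟨ν, hν, hνμ, t', ht', hx⟩ => ?_
    rw [hS.comm_of_mem_closure ht hr]
    refine map_mem_Cspan hr ?_
    have key : t x = (x - (ν - t ν)) + (t' ν - t (t' ν)) := by rw [hx, map_sub]; abel
    rw [key]
    exact add_mem_Cspan (sub_mem_Cspan (hx ▸ sub_mem_DIS hν hνμ ht')
      (hS.sub_map_mem_DIS (Submonoid.subset_closure ht) (mem_DSM hν hνμ)))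
      (hS.sub_map_mem_DIS (Submonoid.subset_closure ht) (hS.map_mem_DSM ht' hν hνμ))
  | one => exact mapsTo_id _
  | mul a b _ _ ha hb => exact ha.comp hb

end CompatibleReductionSystem

end Reduction

section Advance

variable {M M' : Type*} [AddCommGroup M] [TopologicalSpace M] [IsTopologicalAddGroup M]
  [AddCommGroup M'] [TopologicalSpace M']
  {R T1 : Set (AddMonoid.End M)} {Y : Set M} {P : M → M → Prop}
  {R' T1' : Set (AddMonoid.End M')} {Y' : Set M'} {P' : M' → M' → Prop}

theorem CompatibleReductionSystem.mapsTo_DIS_of_advanceable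
    (hS : CompatibleReductionSystem R T1 Y P) (hS' : CompatibleReductionSystem R' T1' Y' P')
    {v : M' →+ M} (hv : Continuous v)
    (hadv : ∀ t' ∈ T1', ∀ b ∈ RstarY R' Y', ∃ t ∈ TS T1, t (v b) = v (t' b)) {μ : M'}
    (hcorr : MapsTo v (DSM R' Y' P' μ) (DSM R Y P (v μ))) :
    MapsTo v (DIS R' Y' P' T1' μ) (DIS R Y P T1 (v μ)) := by
  refine mapsTo_Cspan_Cspan hS'.continuous_of_mem_R v hv fun r hr x ⟨ν, hν, hνμ, t', ht', hx⟩ => ?_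
  obtain ⟨t, ht, hvt⟩ := hadv t' ht' (r ν) ⟨r, hr, ν, hν, rfl⟩
  rw [hx, map_sub, ← hS'.comm_of_mem_closure ht' hr, map_sub, ← hvt]
  exact hS.sub_map_mem_DIS ht (hcorr (map_mem_Cspan hr (mem_DSM hν hνμ)))

end Advance

section Bihom

variable {α β γ : Type*} [AddCommGroup α] [AddCommGroup β] [AddCommGroup γ] {w : α → β → γ}

theorem Bihom.map_zero_right (hw : Bihom w) (a : α) : w a 0 = 0 := by
  have h00 : w 0 0 = 0 := by simpa using hw 0 0 0 0
  simpa [h00] using hw a 0 0 0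

theorem Bihom.map_zero_left (hw : Bihom w) (b : β) : w 0 b = 0 := by
  simpa [hw.map_zero_right] using hw 0 0 b 0

theorem Bihom.map_sub_left (hw : Bihom w) (a a' : α) (b : β) : w (a - a') b = w a b - w a' b := by
  simpa [hw.map_zero_right] using hw a a' b 0

theorem Bihom.map_sub_right (hw : Bihom w) (a : α) (b b' : β) : w a (b - b') = w a b - w a b' := by
  simpa [hw.map_zero_left] using hw a 0 b b'

def Bihom.toAddMonoidHom (hw : Bihom w) : α →+ β →+ γ :=
  AddMonoidHom.ofMapSub (fun a => AddMonoidHom.ofMapSub (w a) (hw.map_sub_right a))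
    fun a a' => AddMonoidHom.ext (hw.map_sub_left a a')

end Bihom

section Montage

variable {I : Type*} {M : I → Type*} [∀ i, AddCommGroup (M i)] [∀ i, TopologicalSpace (M i)]
  [∀ i, IsTopologicalAddGroup (M i)]
  {R T1 : ∀ i, Set (AddMonoid.End (M i))} {Y : ∀ i, Set (M i)} {P : ∀ i, M i → M i → Prop}
  {i i1 i2 : I} {W : M i1 →+ M i2 →+ M i}

theorem Biadv.sub_map_left_mem_DIS (hS : CompatibleReductionSystem (R i) (T1 i) (Y i) (P i))
    (hB : Biadv R T1 Y i i1 i2 fun a b => W a b) {t1 : AddMonoid.End (M i1)} (ht1 : t1 ∈ T1 i1)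
    {b1 : M i1} {b2 : M i2} (hb1 : b1 ∈ RstarY (R i1) (Y i1)) (hb2 : b2 ∈ RstarY (R i2) (Y i2))
    {μ : M i} (hm : W b1 b2 ∈ DSM (R i) (Y i) (P i) μ) :
    W b1 b2 - W (t1 b1) b2 ∈ DIS (R i) (Y i) (P i) (T1 i) μ := by
  obtain ⟨t, ht, he : t (W b1 b2) = W (t1 b1) b2⟩ := hB.1 t1 ht1 b1 hb1 b2 hb2
  exact he ▸ hS.sub_map_mem_DIS ht hm

theorem Biadv.map_sub_map_right_mem_DIS (hS : CompatibleReductionSystem (R i) (T1 i) (Y i) (P i))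
    (hB : Biadv R T1 Y i i1 i2 fun a b => W a b) {u : AddMonoid.End (M i2)} (hu : u ∈ TS (T1 i2))
    {s : AddMonoid.End (M i)} (hs : s ∈ TS (T1 i))
    {b1 : M i1} {b2 : M i2} (hb1 : b1 ∈ RstarY (R i1) (Y i1)) (hb2 : b2 ∈ RstarY (R i2) (Y i2))
    {μ : M i} (hm : W b1 b2 ∈ DSM (R i) (Y i) (P i) μ) :
    s (W b1 b2) - W b1 (u b2) ∈ DIS (R i) (Y i) (P i) (T1 i) μ := by
  obtain ⟨t, ht, he : t (W b1 b2) = W b1 (u b2)⟩ := hB.2 u hu b1 hb1 b2 hb2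
  rw [← he, ← sub_sub_sub_cancel_left _ _ (W b1 b2)]
  exact sub_mem_Cspan (hS.sub_map_mem_DIS ht hm) (hS.sub_map_mem_DIS hs hm)

theorem sub_map_left_mem_DIS_of_mem_DSM_right
    (hS : ∀ k, CompatibleReductionSystem (R k) (T1 k) (Y k) (P k))
    (hW : Continuous fun p : M i1 × M i2 => W p.1 p.2) (hB : Biadv R T1 Y i i1 i2 fun a b => W a b)
    {lam : M i1} {nu : M i2} {μ : M i} (hlam : lam ∈ Y i1)
    (hcorr : MapsTo (W lam) (DSM (R i2) (Y i2) (P i2) nu) (DSM (R i) (Y i) (P i) μ))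
    {t1 : AddMonoid.End (M i1)} (ht1 : t1 ∈ T1 i1) {y : M i2}
    (hy : y ∈ DSM (R i2) (Y i2) (P i2) nu) :
    W lam y - W (t1 lam) y ∈ DIS (R i) (Y i) (P i) (T1 i) μ := by
  have hWr (a : M i1) : Continuous (W a) := hW.comp (continuous_const.prodMk continuous_id)
  refine mapsTo_Cspan_Cspan (hS i2).continuous_of_mem_R (W lam - W (t1 lam))
    ((hWr lam).sub (hWr _)) (fun r hr ν hν => ?_) hy
  exact hB.sub_map_left_mem_DIS (hS i) ht1 (mem_RstarY hlam) ⟨r, hr, ν, hν.1, rfl⟩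
    (hcorr (map_mem_Cspan hr (mem_DSM hν.1 hν.2)))

theorem sub_map_left_mem_DIS_of_mem_DSM_left
    (hS : ∀ k, CompatibleReductionSystem (R k) (T1 k) (Y k) (P k))
    (hW : Continuous fun p : M i1 × M i2 => W p.1 p.2) (hB : Biadv R T1 Y i i1 i2 fun a b => W a b)
    {lam : M i1} {nu : M i2} {μ : M i} (hnu : nu ∈ Y i2)
    (hcorr : MapsTo (W.flip nu) (DSM (R i1) (Y i1) (P i1) lam) (DSM (R i) (Y i) (P i) μ))
    {t1 : AddMonoid.End (M i1)} (ht1 : t1 ∈ T1 i1) {x : M i1}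
    (hx : x ∈ DSM (R i1) (Y i1) (P i1) lam) :
    W x nu - W (t1 x) nu ∈ DIS (R i) (Y i) (P i) (T1 i) μ := by
  have hWl : Continuous (W.flip nu) := hW.comp (continuous_id.prodMk continuous_const)
  refine mapsTo_Cspan_Cspan (hS i1).continuous_of_mem_R
    (W.flip nu - (W.flip nu).comp (t1 : M i1 →+ M i1))
    (hWl.sub (hWl.comp ((hS i1).continuous_of_mem_T1 t1 ht1))) (fun r hr ν hν => ?_) hx
  exact hB.sub_map_left_mem_DIS (hS i) ht1 ⟨r, hr, ν, hν.1, rfl⟩ (mem_RstarY hnu)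
    (hcorr (map_mem_Cspan hr (mem_DSM hν.1 hν.2)))

theorem map_sub_map_right_mem_DIS_of_mem_DSM_left
    (hS : ∀ k, CompatibleReductionSystem (R k) (T1 k) (Y k) (P k))
    (hW : Continuous fun p : M i1 × M i2 => W p.1 p.2) (hB : Biadv R T1 Y i i1 i2 fun a b => W a b)
    {lam : M i1} {nu : M i2} {μ : M i} (hnu : nu ∈ Y i2)
    (hcorr : MapsTo (W.flip nu) (DSM (R i1) (Y i1) (P i1) lam) (DSM (R i) (Y i) (P i) μ))
    {u : AddMonoid.End (M i2)} (hu : u ∈ TS (T1 i2)) {s : AddMonoid.End (M i)}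
    (hs : s ∈ TS (T1 i)) {x : M i1} (hx : x ∈ DSM (R i1) (Y i1) (P i1) lam) :
    s (W x nu) - W x (u nu) ∈ DIS (R i) (Y i) (P i) (T1 i) μ := by
  have hWl (b : M i2) : Continuous (W.flip b) := hW.comp (continuous_id.prodMk continuous_const)
  refine mapsTo_Cspan_Cspan (hS i1).continuous_of_mem_R
    ((s : M i →+ M i).comp (W.flip nu) - W.flip (u nu))
    (((continuous_of_mem_closure (hS i).continuous_of_mem_T1 hs).comp (hWl nu)).sub (hWl _))
    (fun r hr ν hν => ?_) hx
  exact hB.map_sub_map_right_mem_DIS (hS i) hu hs ⟨r, hr, ν, hν.1, rfl⟩ (mem_RstarY hnu)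
    (hcorr (map_mem_Cspan hr (mem_DSM hν.1 hν.2)))

theorem map_sub_map_mem_DIS_of_mem_TS
    (hS : ∀ k, CompatibleReductionSystem (R k) (T1 k) (Y k) (P k))
    (hW : Continuous fun p : M i1 × M i2 => W p.1 p.2) (hB : Biadv R T1 Y i i1 i2 fun a b => W a b)
    {lam : M i1} {nu : M i2} {μ : M i} (hlam : lam ∈ Y i1) (hnu : nu ∈ Y i2)
    (hcorr₁ : MapsTo (W.flip nu) (DSM (R i1) (Y i1) (P i1) lam) (DSM (R i) (Y i) (P i) μ))
    (hcorr₂ : MapsTo (W lam) (DSM (R i2) (Y i2) (P i2) nu) (DSM (R i) (Y i) (P i) μ))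
    {u : AddMonoid.End (M i2)} (hu : u ∈ TS (T1 i2)) (hunu : u nu ∈ DSM (R i2) (Y i2) (P i2) nu)
    {s : AddMonoid.End (M i)} (hs : s ∈ TS (T1 i)) (hsW : s (W lam nu) = W lam (u nu))
    {a : AddMonoid.End (M i1)} (ha : a ∈ TS (T1 i1)) :
    s (W lam nu - W (a lam) nu) ∈ DIS (R i) (Y i) (P i) (T1 i) μ := by
  induction ha using Submonoid.closure_induction_left with
  | one =>
    rw [AddMonoid.End.coe_one, id, sub_self, map_zero]
    exact zero_mem_Cspan
  | mul_left t1 ht1 a ha ih =>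
    rw [AddMonoid.End.coe_mul, Function.comp_apply, ← sub_add_sub_cancel _ (W (a lam) nu),
      map_add]
    refine add_mem_Cspan ih ?_
    rcases (hS i1).compatible_of_mem_closure ha lam hlam with h | h
    · rw [h]
      by_cases h1 : t1 lam = lam
      · rw [h1, sub_self, map_zero]
        exact zero_mem_Cspan
      rw [map_sub, hsW, ← sub_sub_sub_cancel_right _ _ (W (t1 lam) (u nu))]
      exact sub_mem_Cspan
        (sub_map_left_mem_DIS_of_mem_DSM_right hS hW hB hlam hcorr₂ ht1 hunu)
        (map_sub_map_right_mem_DIS_of_mem_DSM_left hS hW hB hnu hcorr₁ hu hs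
          ((hS i1).map_mem_DSM_of_ne (Submonoid.subset_closure ht1) hlam h1))
    · exact (hS i).mapsTo_DIS hs μ
        (sub_map_left_mem_DIS_of_mem_DSM_left hS hW hB hnu hcorr₁ ht1 h)

theorem sub_mem_DIS_of_biadv
    (hS : ∀ k, CompatibleReductionSystem (R k) (T1 k) (Y k) (P k))
    (hW : Continuous fun p : M i1 × M i2 => W p.1 p.2) (hB : Biadv R T1 Y i i1 i2 fun a b => W a b)
    {lam : M i1} {nu : M i2} (hlam : lam ∈ Y i1) (hnu : nu ∈ Y i2)
    (hcorr₁ : MapsTo (W.flip nu) (DSM (R i1) (Y i1) (P i1) lam) (DSM (R i) (Y i) (P i) (W lam nu)))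
    (hcorr₂ : MapsTo (W lam) (DSM (R i2) (Y i2) (P i2) nu) (DSM (R i) (Y i) (P i) (W lam nu)))
    {t : AddMonoid.End (M i1)} (ht : t ∈ TS (T1 i1)) (htlam : t lam ≠ lam)
    {u : AddMonoid.End (M i2)} (hu : u ∈ TS (T1 i2)) (hunu : u nu ≠ nu) :
    W (t lam) nu - W lam (u nu) ∈ DIS (R i) (Y i) (P i) (T1 i) (W lam nu) := by
  obtain ⟨s, hs, hsW : s (W lam nu) = W lam (u nu)⟩ :=
    hB.2 u hu lam (mem_RstarY hlam) nu (mem_RstarY hnu)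
  have htlam' := (hS i1).map_mem_DSM_of_ne ht hlam htlam
  have key : W (t lam) nu - W lam (u nu)
      = (W (t lam) nu - s (W (t lam) nu)) - s (W lam nu - W (t lam) nu) := by
    rw [map_sub, hsW]; abel
  rw [key]
  exact sub_mem_Cspan ((hS i).sub_map_mem_DIS hs (hcorr₁ htlam'))
    (map_sub_map_mem_DIS_of_mem_TS hS hW hB hlam hnu hcorr₁ hcorr₂ hu
      ((hS i2).map_mem_DSM_of_ne hu hnu hunu) hs hsW ht)

end Montage

theorem ShadowMinimal.shadowCritical {I : Type*} {M : I → Type*} [∀ i, AddCommGroup (M i)]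
    {T1 : ∀ i, Set (AddMonoid.End (M i))} {Y : ∀ i, Set (M i)} {V : ∀ i j : I, Set (M j →+ M i)}
    {i : I} {A : Amb (M i)} (h : ShadowMinimal T1 Y V A) : ShadowCritical T1 Y V A :=
  fun ⟨i', A', hA', _, hp⟩ => h ⟨i', A', hA', hp⟩

section Sorts

variable {I : Type*} {M : I → Type*} [∀ i, AddCommGroup (M i)] [∀ i, TopologicalSpace (M i)]
  [∀ i, IsTopologicalAddGroup (M i)]
  {R T1 : ∀ i, Set (AddMonoid.End (M i))} {Y : ∀ i, Set (M i)} {P : ∀ i, M i → M i → Prop}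
  {V : ∀ i j : I, Set (M j →+ M i)}

theorem resolvable_of_isMontage (hS : ∀ k, CompatibleReductionSystem (R k) (T1 k) (Y k) (P k))
    (hVcorr : ∀ i j, ∀ v ∈ V i j, ∀ μ ∈ Y j, v μ ∈ Y i →
      ∀ x ∈ DSM (R j) (Y j) (P j) μ, v x ∈ DSM (R i) (Y i) (P i) (v μ))
    {i i1 i2 : I} {A : Amb (M i)} (hA : IsAmb (T1 i) (Y i) A)
    (hM : IsMontage R T1 Y V i1 i2 A) : Resolvable (R i) (T1 i) (Y i) (P i) A := by
  obtain ⟨-, -, hμ, htμ, huμ⟩ := hA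
  obtain ⟨w, hwc, hw, hB, hV₁, hV₂, lam, hlam, t, ht, nu, hnu, u, hu, hmu, htmu, humu⟩ := hM
  let W := hw.toAddMonoidHom
  obtain ⟨v₁, hv₁, hv₁w⟩ := hV₁ nu hnu
  obtain ⟨v₂, hv₂, hv₂w⟩ := hV₂ lam hlam
  have hcorr₁ : MapsTo (W.flip nu) (DSM (R i1) (Y i1) (P i1) lam)
      (DSM (R i) (Y i) (P i) (W lam nu)) := fun x hx => by
    have h := hVcorr i i1 v₁ hv₁ lam hlam (by rw [hv₁w, ← hmu]; exact hμ) x hx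
    rwa [hv₁w, hv₁w] at h
  have hcorr₂ : MapsTo (W lam) (DSM (R i2) (Y i2) (P i2) nu)
      (DSM (R i) (Y i) (P i) (W lam nu)) := fun y hy => by
    have h := hVcorr i i2 v₂ hv₂ nu hnu (by rw [hv₂w, ← hmu]; exact hμ) y hy
    rwa [hv₂w, hv₂w] at h
  unfold Resolvable
  rw [htmu, humu, hmu]
  exact sub_mem_DIS_of_biadv hS hwc hB hlam hnu hcorr₁ hcorr₂ ht
    (fun h => htμ (by rw [htmu, h, hmu])) hu (fun h => huμ (by rw [humu, h, hmu]))

theorem resolvable_of_isShadow {i i' : I}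
    (hS : CompatibleReductionSystem (R i) (T1 i) (Y i) (P i))
    (hS' : CompatibleReductionSystem (R i') (T1 i') (Y i') (P i'))
    (hVcont : ∀ v ∈ V i i', Continuous v)
    (hVadv : ∀ v ∈ V i i', ∀ t' ∈ T1 i', ∀ b ∈ RstarY (R i') (Y i'),
      ∃ t ∈ TS (T1 i), t (v b) = v (t' b))
    (hVcorr : ∀ v ∈ V i i', ∀ μ ∈ Y i', v μ ∈ Y i →
      ∀ x ∈ DSM (R i') (Y i') (P i') μ, v x ∈ DSM (R i) (Y i) (P i) (v μ))
    {A : Amb (M i)} {A' : Amb (M i')} (hμ : A.mu ∈ Y i) (hμ' : A'.mu ∈ Y i')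
    (h : IsShadow V A A') (h' : Resolvable (R i') (T1 i') (Y i') (P i') A') :
    Resolvable (R i) (T1 i) (Y i) (P i) A := by
  obtain ⟨v, hv, hmu, ht, hu⟩ := h
  unfold Resolvable
  rw [ht, hu, ← map_sub, hmu]
  exact hS.mapsTo_DIS_of_advanceable hS' (hVcont v hv) (hVadv v hv)
    (hVcorr v hv _ hμ' (hmu ▸ hμ)) h'

end Sorts
theorem critical_ambiguities_suffice_general
    {I : Type*} {M : I → Type*}
    [∀ i, AddCommGroup (M i)] [∀ i, UniformSpace (M i)] [∀ i, IsUniformAddGroup (M i)]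
    (R : ∀ i, Set (AddMonoid.End (M i)))
    (hRcont : ∀ i, ∀ r ∈ R i, Continuous r)
    (T1 : ∀ i, Set (AddMonoid.End (M i)))
    (hT1cont : ∀ i, ∀ t ∈ T1 i, Continuous t)
    (hT1comm : ∀ i, ∀ t ∈ T1 i, ∀ r ∈ R i, ∀ a : M i, t (r a) = r (t a))
    (Y : ∀ i, Set (M i))
    (P : ∀ i, M i → M i → Prop)
    (hPtrans : ∀ i, ∀ μ ν ρ : M i, P i μ ν → P i ν ρ → P i μ ρ)
    (hcompat : ∀ i, ∀ t ∈ T1 i, Compatible (R i) (Y i) (P i) t)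
    (V : ∀ i j : I, Set (M j →+ M i))
    (hVcont : ∀ i j, ∀ v ∈ V i j, Continuous v)
    (hVadv : ∀ i j, ∀ v ∈ V i j, ∀ t' ∈ T1 j, ∀ b ∈ RstarY (R j) (Y j),
      ∃ t ∈ TS (T1 i), t (v b) = v (t' b))
    (hVcorr : ∀ i j, ∀ v ∈ V i j, ∀ μ ∈ Y j, v μ ∈ Y i →
      ∀ x ∈ DSM (R j) (Y j) (P j) μ, v x ∈ DSM (R i) (Y i) (P i) (v μ)) :
    (∀ i, ∀ A : Amb (M i), IsAmb (T1 i) (Y i) A →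
      A.t A.mu - A.u A.mu ∈ DIS (R i) (Y i) (P i) (T1 i) A.mu) ↔
    (∀ i, ∀ A : Amb (M i), IsAmb (T1 i) (Y i) A → VCritical R T1 Y V A →
      A.t A.mu - A.u A.mu ∈ DIS (R i) (Y i) (P i) (T1 i) A.mu) := by
  have hS i : CompatibleReductionSystem (R i) (T1 i) (Y i) (P i) :=
    ⟨hRcont i, hT1cont i, hT1comm i, hcompat i, hPtrans i⟩
  have hshadowCritical i (A : Amb (M i)) (hA : IsAmb (T1 i) (Y i) A)
      (hcrit : VCritical R T1 Y V A → Resolvable (R i) (T1 i) (Y i) (P i) A)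
      (hsc : ShadowCritical T1 Y V A) : Resolvable (R i) (T1 i) (Y i) (P i) A := by
    by_cases hM : ∃ i1 i2, IsMontage R T1 Y V i1 i2 A
    · obtain ⟨i1, i2, hM⟩ := hM
      exact resolvable_of_isMontage hS hVcorr hA hM
    · exact hcrit ⟨hsc, fun i1 i2 h => hM ⟨i1, i2, h⟩⟩
  refine ⟨fun hall i A hA _ => hall i A hA, fun hcrit i A hA => ?_⟩
  by_cases hsc : ShadowCritical T1 Y V A
  · exact hshadowCritical i A hA (hcrit i A hA) hsc
  obtain ⟨i', A', hA', hmin, hsh, -⟩ := not_not.1 hsc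
  exact resolvable_of_isShadow (hS i) (hS i') (hVcont i i') (hVadv i i') (hVcorr i i')
    hA.2.2.1 hA'.2.2.1 hsh
    (hshadowCritical i' A' hA' (hcrit i' A' hA') hmin.shadowCritical)

theorem critical_ambiguities_suffice
    {I : Type*} {M : I → Type*}
    [∀ i, AddCommGroup (M i)] [∀ i, UniformSpace (M i)] [∀ i, IsUniformAddGroup (M i)]
    [∀ i, CompleteSpace (M i)] [∀ i, T2Space (M i)]
    (B : ∀ i, ℕ → AddSubgroup (M i))
    (hBopen : ∀ i n, IsOpen (B i n : Set (M i)))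
    (hBanti : ∀ i n, (B i (n + 1) : Set (M i)) ⊆ (B i n : Set (M i)))
    (hBbasis : ∀ i, (nhds (0 : M i)).HasBasis (fun _ : ℕ => True)
      (fun n => (B i n : Set (M i))))
    (hBsep : ∀ i, ⋂ n, (B i n : Set (M i)) = {0})
    (R : ∀ i, Set (AddMonoid.End (M i)))
    (hRcont : ∀ i, ∀ r ∈ R i, Continuous r)
    (hRsmall : ∀ i, ∀ r ∈ R i, ∀ n : ℕ, ∀ a ∈ B i n, r a ∈ B i n)
    (T1 : ∀ i, Set (AddMonoid.End (M i)))
    (hT1cont : ∀ i, ∀ t ∈ T1 i, Continuous t)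
    (hT1comm : ∀ i, ∀ t ∈ T1 i, ∀ r ∈ R i, ∀ a : M i, t (r a) = r (t a))
    (Y : ∀ i, Set (M i))
    (P : ∀ i, M i → M i → Prop)
    (hPirr : ∀ i, ∀ μ : M i, ¬ P i μ μ)
    (hPtrans : ∀ i, ∀ μ ν ρ : M i, P i μ ν → P i ν ρ → P i μ ρ)
    (hcompat : ∀ i, ∀ t ∈ T1 i, Compatible (R i) (Y i) (P i) t)
    (V : ∀ i j : I, Set (M j →+ M i))
    (hVcont : ∀ i j, ∀ v ∈ V i j, Continuous v)
    (hVadv : ∀ i j, ∀ v ∈ V i j, ∀ t' ∈ T1 j, ∀ b ∈ RstarY (R j) (Y j),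
      ∃ t ∈ TS (T1 i), t (v b) = v (t' b))
    (hVcorr : ∀ i j, ∀ v ∈ V i j, ∀ μ ∈ Y j, v μ ∈ Y i →
      ∀ x ∈ DSM (R j) (Y j) (P j) μ, v x ∈ DSM (R i) (Y i) (P i) (v μ)) :
    (∀ i, ∀ A : Amb (M i), IsAmb (T1 i) (Y i) A →
      A.t A.mu - A.u A.mu ∈ DIS (R i) (Y i) (P i) (T1 i) A.mu) ↔
    (∀ i, ∀ A : Amb (M i), IsAmb (T1 i) (Y i) A → VCritical R T1 Y V A →
      A.t A.mu - A.u A.mu ∈ DIS (R i) (Y i) (P i) (T1 i) A.mu) :=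
  critical_ambiguities_suffice_general R hRcont T1 hT1cont hT1comm Y P hPtrans hcompat V hVcont
    hVadv hVcorr
end

section
/- Assume T(S) is equicontinuous and every element of T(S) is compatible with a partial order P on Y. If P satisfies the topological descending chain condition, then Per(S) = M̄, i.e. every element of M̄ is persistently reducible. -/
open Set Filter Topology Pointwise

def IrrS {M : Type*} [AddCommGroup M] (T1 : Set (AddMonoid.End M)) : Set M :=
  {a | ∀ t ∈ TS T1, t a = a}

def IS {M : Type*} [AddCommGroup M] [TopologicalSpace M]
    (T1 : Set (AddMonoid.End M)) : Set M :=
  closure (AddSubgroup.closure {x : M | ∃ a : M, ∃ t ∈ TS T1, x = a - t a} : Set M)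

def Stuck {M : Type*} [AddCommGroup M] (T1 : Set (AddMonoid.End M)) (N : Set M) (a : M) :
    Prop :=
  ∀ t ∈ TS T1, t a ∈ N

def PerE {M : Type*} [AddCommGroup M] (T1 : Set (AddMonoid.End M)) (ε : Set M) : Set M :=
  {a | ∀ t1 ∈ TS T1, ∃ t2 ∈ TS T1, ∃ b ∈ IrrS T1,
    Stuck T1 {x | x - b ∈ ε} (t2 (t1 a))}

def Per {M : Type*} [AddCommGroup M] (T1 : Set (AddMonoid.End M))
    (B : ℕ → AddSubgroup M) : Set M :=
  ⋂ n, PerE T1 (B n)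

def UniqE {M : Type*} [AddCommGroup M] (T1 : Set (AddMonoid.End M)) (ε : Set M) : Set M :=
  {a | ∀ t1 ∈ TS T1, ∀ t2 ∈ TS T1, ∀ b1 ∈ IrrS T1, ∀ b2 ∈ IrrS T1,
    Stuck T1 {x | x - b1 ∈ ε} (t1 a) → Stuck T1 {x | x - b2 ∈ ε} (t2 a) → b1 - b2 ∈ ε}

def RedE {M : Type*} [AddCommGroup M] (T1 : Set (AddMonoid.End M))
    (B : ℕ → AddSubgroup M) (ε : Set M) : Set M :=
  Per T1 B ∩ UniqE T1 ε

def Red {M : Type*} [AddCommGroup M] (T1 : Set (AddMonoid.End M))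
    (B : ℕ → AddSubgroup M) : Set M :=
  ⋂ n, RedE T1 B (B n)

def Equicont {M : Type*} [AddCommGroup M] (T1 : Set (AddMonoid.End M))
    (B : ℕ → AddSubgroup M) : Prop :=
  ∀ n : ℕ, ∃ m : ℕ, ∀ t ∈ TS T1, ∀ a ∈ B m, t a ∈ B n

def TDCC {M : Type*} [AddCommGroup M] [TopologicalSpace M]
    (Y : Set M) (P : M → M → Prop) : Prop :=
  ∀ μ : ℕ → M, (∀ n, μ n ∈ Y) → (∀ n, P (μ (n + 1)) (μ n)) →
    Filter.Tendsto μ Filter.atTop (nhds 0)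


/-! Fix a subgroup `ε`. The set `PerE T1 ε` is an additive subgroup, stable under every `r ∈ R`
(as `r` commutes with `T(S)` and maps `ε` into itself), and by equicontinuity it contains a
neighbourhood of `0`; being an open subgroup it is also closed, so it contains the `Cspan` of each
of its subsets. If all `P`-predecessors of `μ ∈ Y` lie in `PerE T1 ε`, then so does `μ`, since
compatibility makes each `t μ` either `μ` or an element of `DSM μ`. A counterexample in `Y` would
therefore start an infinite descending chain of counterexamples, which by TDCC tends to `0` and so
enters that neighbourhood. Hence `Y ⊆ PerE T1 ε`, and `Cspan R Y = M` gives the theorem. -/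

section PersistentReduction

variable {M : Type*} [AddCommGroup M] {T1 : Set (AddMonoid.End M)}

variable (T1) in
lemma one_mem_TS : (1 : AddMonoid.End M) ∈ TS T1 :=
  Submonoid.one_mem _

lemma mul_mem_TS {s t : AddMonoid.End M} (hs : s ∈ TS T1) (ht : t ∈ TS T1) : s * t ∈ TS T1 :=
  Submonoid.mul_mem _ hs ht

lemma commute_of_mem_TS {r t : AddMonoid.End M} (hr : ∀ s ∈ T1, Commute s r) (ht : t ∈ TS T1) :
    Commute t r := by
  induction ht using Submonoid.closure_induction with
  | mem s hs => exact hr s hs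
  | one => exact Commute.one_left r
  | mul s u _ _ hs hu => exact hs.mul_left hu

lemma Stuck.map {N : Set M} {a : M} (h : Stuck T1 N a) {t : AddMonoid.End M} (ht : t ∈ TS T1) :
    Stuck T1 N (t a) :=
  fun s hs => h (s * t) (mul_mem_TS hs ht)

lemma add_mem_IrrS {a b : M} (ha : a ∈ IrrS T1) (hb : b ∈ IrrS T1) : a + b ∈ IrrS T1 :=
  fun t ht => by rw [map_add, ha t ht, hb t ht]

lemma neg_mem_IrrS {a : M} (ha : a ∈ IrrS T1) : -a ∈ IrrS T1 :=
  fun t ht => by rw [map_neg, ha t ht]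

lemma mem_PerE_of_forall_map_mem {ε : Set M} {a : M} (h : ∀ t ∈ TS T1, t a ∈ ε) :
    a ∈ PerE T1 ε :=
  fun t1 ht1 => ⟨1, one_mem_TS T1, 0, fun t _ => map_zero t,
    fun t ht => by simpa using h (t * t1) (mul_mem_TS ht ht1)⟩

lemma exists_stuck_of_map_mem_PerE {ε : Set M} {a : M} {s : AddMonoid.End M} (hs : s ∈ TS T1)
    (ha : s a ∈ PerE T1 ε) :
    ∃ t ∈ TS T1, ∃ b ∈ IrrS T1, Stuck T1 {x | x - b ∈ ε} (t a) := by
  obtain ⟨t, ht, b, hb, hstuck⟩ := ha 1 (one_mem_TS T1)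
  exact ⟨t * s, mul_mem_TS ht hs, b, hb, hstuck⟩

lemma add_mem_PerE {ε : AddSubgroup M} {a a' : M} (ha : a ∈ PerE T1 ε) (ha' : a' ∈ PerE T1 ε) :
    a + a' ∈ PerE T1 ε := by
  intro t1 ht1
  obtain ⟨t2, ht2, b, hb, hstuck⟩ := ha t1 ht1
  obtain ⟨t3, ht3, b', hb', hstuck'⟩ := ha' (t2 * t1) (mul_mem_TS ht2 ht1)
  refine ⟨t3 * t2, mul_mem_TS ht3 ht2, b + b', add_mem_IrrS hb hb', fun t ht => ?_⟩
  have hsum := ε.add_mem (hstuck.map ht3 t ht) (hstuck' t ht)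
  show _ - _ ∈ ε
  convert hsum using 1
  simp only [AddMonoid.End.coe_mul, Function.comp_apply, map_add]
  abel

lemma neg_mem_PerE {ε : AddSubgroup M} {a : M} (ha : a ∈ PerE T1 ε) : -a ∈ PerE T1 ε := by
  intro t1 ht1
  obtain ⟨t2, ht2, b, hb, hstuck⟩ := ha t1 ht1
  refine ⟨t2, ht2, -b, neg_mem_IrrS hb, fun t ht => ?_⟩
  show _ - _ ∈ ε
  convert ε.neg_mem (hstuck t ht) using 1
  rw [map_neg, map_neg, map_neg, neg_sub_neg, neg_sub]

variable (T1) in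
def perEAddSubgroup (ε : AddSubgroup M) : AddSubgroup M where
  carrier := PerE T1 ε
  zero_mem' := mem_PerE_of_forall_map_mem fun t _ => by simp
  add_mem' := add_mem_PerE
  neg_mem' := neg_mem_PerE

lemma map_mem_PerE {ε : AddSubgroup M} {r : AddMonoid.End M} (hr : ∀ t ∈ TS T1, Commute t r)
    (hrε : ∀ x ∈ ε, r x ∈ ε) {a : M} (ha : a ∈ PerE T1 ε) : r a ∈ PerE T1 ε := by
  have hcomm : ∀ t ∈ TS T1, ∀ x, t (r x) = r (t x) := fun t ht x => DFunLike.congr_fun (hr t ht) x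
  intro t1 ht1
  obtain ⟨t2, ht2, b, hb, hstuck⟩ := ha t1 ht1
  refine ⟨t2, ht2, r b, fun t ht => by rw [hcomm t ht, hb t ht], fun t ht => ?_⟩
  show _ - _ ∈ ε
  convert hrε _ (hstuck t ht) using 1
  rw [hcomm t1 ht1, hcomm t2 ht2, hcomm t ht, map_sub]

lemma Cspan_subset {R : Set (AddMonoid.End M)} [TopologicalSpace M] {Z : Set M}
    {H : AddSubgroup M} (hZ : Z ⊆ H) (hH : IsClosed (H : Set M)) (hR : ∀ r ∈ R, ∀ a ∈ H, r a ∈ H) :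
    Cspan R Z ⊆ H :=
  sInter_subset_of_mem ⟨hZ, hH, ⟨H, rfl⟩, hR⟩

lemma Cspan_subset_PerE {R : Set (AddMonoid.End M)} [TopologicalSpace M] [IsTopologicalAddGroup M]
    {ε : AddSubgroup M} (hε : PerE T1 ε ∈ 𝓝 0) (hcomm : ∀ r ∈ R, ∀ t ∈ TS T1, Commute t r)
    (hRε : ∀ r ∈ R, ∀ x ∈ ε, r x ∈ ε) {Z : Set M} (hZ : Z ⊆ PerE T1 ε) :
    Cspan R Z ⊆ PerE T1 ε :=
  Cspan_subset (H := perEAddSubgroup T1 ε) hZ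
    (AddSubgroup.isClosed_of_isOpen _ (AddSubgroup.isOpen_of_mem_nhds _ hε))
    fun r hr _ ha => map_mem_PerE (hcomm r hr) (hRε r hr) ha

lemma mem_PerE_of_DSM_subset {R : Set (AddMonoid.End M)} [TopologicalSpace M] {Y : Set M}
    {P : M → M → Prop} (hcompat : ∀ t ∈ TS T1, Compatible R Y P t) {ε : AddSubgroup M} {μ : M}
    (hμ : μ ∈ Y) (hDSM : DSM R Y P μ ⊆ PerE T1 ε) : μ ∈ PerE T1 ε := by
  intro t1 ht1
  rcases hcompat t1 ht1 μ hμ with hfix | hlower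
  · rw [hfix]
    by_cases hirr : μ ∈ IrrS T1
    · exact ⟨1, one_mem_TS T1, μ, hirr, fun t ht => by simp [hirr t ht]⟩
    · obtain ⟨s, hs, hsμ⟩ : ∃ s ∈ TS T1, s μ ≠ μ := by simpa [IrrS] using hirr
      exact exists_stuck_of_map_mem_PerE hs (hDSM ((hcompat s hs μ hμ).resolve_left hsμ))
  · exact exists_stuck_of_map_mem_PerE (one_mem_TS T1) (hDSM hlower)

lemma TDCC.subset_of_forall_lt_mem [TopologicalSpace M] {Y : Set M} {P : M → M → Prop}
    (hP : TDCC Y P) {S : Set M} (hS : S ∈ 𝓝 0)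
    (hind : ∀ μ ∈ Y, (∀ ν ∈ Y, P ν μ → ν ∈ S) → μ ∈ S) : Y ⊆ S := by
  by_contra hY
  obtain ⟨μ₀, hμ₀⟩ := not_subset.mp hY
  have hdesc : ∀ μ : ↥(Y \ S), ∃ ν : ↥(Y \ S), P ν μ := by
    rintro ⟨μ, hμY, hμS⟩
    by_contra! hmin
    exact hμS (hind μ hμY fun ν hνY hν => by_contra fun hνS => hmin ⟨ν, hνY, hνS⟩ hν)
  choose next hnext using hdesc
  let chain : ℕ → ↥(Y \ S) := fun k => next^[k] ⟨μ₀, hμ₀⟩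
  have hlim := hP (fun k => (chain k : M)) (fun k => (chain k).2.1) fun k => by
    simpa only [chain, Function.iterate_succ_apply'] using hnext (chain k)
  obtain ⟨k, hk⟩ := (hlim.eventually_mem hS).exists
  exact (chain k).2.2 hk

end PersistentReduction

theorem persistently_reducible_everywhere_general
    {M : Type*} [AddCommGroup M] [UniformSpace M] [IsUniformAddGroup M]
    (B : ℕ → AddSubgroup M)
    (hBbasis : (nhds (0 : M)).HasBasis (fun _ : ℕ => True) (fun n => (B n : Set M)))
    (R : Set (AddMonoid.End M))
    (hRsmall : ∀ r ∈ R, ∀ n : ℕ, ∀ a ∈ B n, r a ∈ B n)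
    (T1 : Set (AddMonoid.End M))
    (hT1comm : ∀ t ∈ T1, ∀ r ∈ R, ∀ a : M, t (r a) = r (t a))
    (Y : Set M)
    (hYspan : Cspan R Y = (Set.univ : Set M))
    (P : M → M → Prop)
    (hTDCC : TDCC Y P)
    (hcompat : ∀ t ∈ TS T1, Compatible R Y P t)
    (hequi : Equicont T1 B) :
    Per T1 B = Set.univ := by
  have hcomm : ∀ r ∈ R, ∀ t ∈ TS T1, Commute t r := fun r hr _ =>
    commute_of_mem_TS fun s hs => AddMonoidHom.ext (hT1comm s hs r hr)
  refine eq_univ_of_univ_subset (subset_iInter fun n => ?_)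
  obtain ⟨m, hm⟩ := hequi n
  have hnhds : PerE T1 (B n) ∈ 𝓝 0 := mem_of_superset (hBbasis.mem_of_mem trivial)
    fun x hx => mem_PerE_of_forall_map_mem fun t ht => hm t ht x hx
  have hspan {Z : Set M} : Z ⊆ PerE T1 (B n) → Cspan R Z ⊆ PerE T1 (B n) :=
    Cspan_subset_PerE hnhds hcomm fun r hr => hRsmall r hr n
  have hY : Y ⊆ PerE T1 (B n) := hTDCC.subset_of_forall_lt_mem hnhds fun μ hμ hlower =>
    mem_PerE_of_DSM_subset hcompat hμ (hspan fun ν hν => hlower ν hν.1 hν.2)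
  simpa [hYspan] using hspan hY

theorem persistently_reducible_everywhere
    {M : Type*} [AddCommGroup M] [UniformSpace M] [IsUniformAddGroup M]
    [CompleteSpace M] [T2Space M]
    (B : ℕ → AddSubgroup M)
    (hBopen : ∀ n, IsOpen (B n : Set M))
    (hBanti : ∀ n, (B (n + 1) : Set M) ⊆ (B n : Set M))
    (hBbasis : (nhds (0 : M)).HasBasis (fun _ : ℕ => True) (fun n => (B n : Set M)))
    (hBsep : ⋂ n, (B n : Set M) = {0})
    (R : Set (AddMonoid.End M))
    (hRcont : ∀ r ∈ R, Continuous r)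
    (hRsmall : ∀ r ∈ R, ∀ n : ℕ, ∀ a ∈ B n, r a ∈ B n)
    (T1 : Set (AddMonoid.End M))
    (hT1cont : ∀ t ∈ T1, Continuous t)
    (hT1comm : ∀ t ∈ T1, ∀ r ∈ R, ∀ a : M, t (r a) = r (t a))
    (Y : Set M)
    (hYspan : Cspan R Y = (Set.univ : Set M))
    (P : M → M → Prop)
    (hPirr : ∀ μ, ¬ P μ μ)
    (hPtrans : ∀ μ ν ρ, P μ ν → P ν ρ → P μ ρ)
    (hTDCC : TDCC Y P)
    (hcompat : ∀ t ∈ TS T1, Compatible R Y P t)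
    (hequi : Equicont T1 B) :
    Per T1 B = Set.univ :=
  persistently_reducible_everywhere_general B hBbasis R hRsmall T1 hT1comm Y hYspan P hTDCC hcompat
    hequi
end
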